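/- For every integer n ≥ 1, the number of Catalan words of length n avoiding the vincular pattern 1-22 equals the n-th Motzkin number M_n. -/

import Mathlib

/-- A Catalan word: a word of positive integers starting with 1 in which each
letter exceeds its predecessor by at most 1. -/
def IsCatalanWord {n : ℕ} (w : Fin n → ℕ) : Prop :=
  (∀ i, 1 ≤ w i) ∧ (∀ h : 0 < n, w ⟨0, h⟩ = 1) ∧
  ∀ i : ℕ, ∀ h : i + 1 < n, w ⟨i + 1, h⟩ ≤ w ⟨i, by omega⟩ + 1

/-- `w` contains the vincular pattern 1-22: there are indices `i < j` with
`w i < w j = w (j+1)`. -/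
def Contains1_22 {n : ℕ} (w : Fin n → ℕ) : Prop :=
  ∃ i j : ℕ, ∃ hj : j + 1 < n, ∃ hij : i < j,
    w ⟨i, by omega⟩ < w ⟨j, by omega⟩ ∧ w ⟨j, by omega⟩ = w ⟨j + 1, hj⟩

/-- The `n`-th Motzkin number: the number of sequences of `n` steps in
`{-1, 0, 1}` with all partial sums nonnegative and total sum zero. -/
noncomputable def motzkinNumber (n : ℕ) : ℕ :=
  Set.ncard {s : Fin n → ℤ | (∀ i, s i = -1 ∨ s i = 0 ∨ s i = 1) ∧
    (∀ j, 0 ≤ ∑ i ∈ Finset.Iic j, s i) ∧ (∑ i, s i = 0)}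

/-!
Both sides satisfy the Motzkin recurrence `M (n+1) = M n + ∑ i < n, M i * M (n-1-i)`.
A Motzkin path starts with a flat step or with an up step, which is matched by its first return
to the axis. A Catalan word avoids 1-22 exactly when equal neighbours only occur at height 1, so
it is either `1 w` or `1 2 s w`, where `2 s` is its maximal factor above 1 (a word above height
2 without equal neighbours) and `w` again avoids 1-22. A word `b t` above `b` without equal
neighbours splits in the same way: `t` is `(b+1) s` or `(b+1) s b t'`, where `(b+1) s` is the
maximal factor above `b`. Induction on the length gives the Motzkin numbers for all three
families.
-/

open Finset

def motzkin : ℕ → ℕ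
  | 0 => 1
  | n + 1 => motzkin n + ∑ i : Fin n, motzkin i * motzkin (n - 1 - i)
decreasing_by all_goals omega

theorem motzkin_zero : motzkin 0 = 1 := by
  rw [motzkin]

theorem motzkin_succ (n : ℕ) :
    motzkin (n + 1) = motzkin n + ∑ i ∈ range n, motzkin i * motzkin (n - 1 - i) := by
  rw [motzkin, Finset.sum_range]

theorem card_image_union_biUnion_image {α β γ δ : Type*} [DecidableEq α]
    {X : Finset β} {f : β → α} {Y : ℕ → Finset γ} {Z : ℕ → Finset δ} {g : γ × δ → α} {n : ℕ}
    (hf : f.Injective)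
    (hg : ∀ i j y y' z z', y ∈ Y i → y' ∈ Y j → z ∈ Z i → z' ∈ Z j →
      g (y, z) = g (y', z') → i = j ∧ y = y' ∧ z = z')
    (hfg : ∀ x ∈ X, ∀ i y z, y ∈ Y i → z ∈ Z i → f x ≠ g (y, z)) :
    (X.image f ∪ (range n).biUnion fun i => (Y i ×ˢ Z i).image g).card =
      X.card + ∑ i ∈ range n, (Y i).card * (Z i).card := by
  rw [card_union_of_disjoint, card_image_of_injective _ hf, card_biUnion]
  · congr 1
    refine sum_congr rfl fun i _ => ?_
    rw [card_image_of_injOn, card_product]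
    rintro ⟨y, z⟩ hyz ⟨y', z'⟩ hyz' h
    simp only [coe_product, Set.mem_prod, mem_coe] at hyz hyz'
    obtain ⟨-, rfl, rfl⟩ := hg i i y y' z z' hyz.1 hyz'.1 hyz.2 hyz'.2 h
    rfl
  · intro i _ j _ hij
    simp only [Function.onFun, disjoint_left, mem_image, mem_product]
    rintro _ ⟨⟨y, z⟩, ⟨hy, hz⟩, rfl⟩ ⟨⟨y', z'⟩, ⟨hy', hz'⟩, h⟩
    exact hij (hg j i y' y z' z hy' hy hz' hz h).1.symm
  · simp only [disjoint_left, mem_image, mem_biUnion, mem_product]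
    rintro _ ⟨x, hx, rfl⟩ ⟨i, -, ⟨y, z⟩, ⟨hy, hz⟩, h⟩
    exact hfg x hx i y z hy hz h.symm

theorem List.finite_setOf_length_eq_forall_mem {α : Type*} {s : Set α} (hs : s.Finite) (n : ℕ) :
    {l : List α | l.length = n ∧ ∀ x ∈ l, x ∈ s}.Finite := by
  have := hs.to_subtype
  refine ((List.finite_length_eq s n).image (List.map (↑))).subset ?_
  rintro l ⟨hl, hls⟩
  lift l to List s using hls
  exact ⟨l, by simpa using hl, rfl⟩

theorem List.le_add_length_of_isChain {a : ℕ} {l : List ℕ}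
    (h : (a :: l).IsChain fun x y => y ≤ x + 1) : ∀ y ∈ l, y ≤ a + l.length := by
  induction l generalizing a with
  | nil => simp
  | cons b l ih =>
    rw [List.isChain_cons_cons] at h
    intro y hy
    rcases List.mem_cons.1 hy with rfl | hy
    · simp only [List.length_cons]; omega
    · have := ih h.2 y hy
      simp only [List.length_cons]; omega

theorem List.IsChain.forall_mem_of_cons {α : Type*} {R : α → α → Prop} {P : α → Prop} {a : α}
    {l : List α} (h : (a :: l).IsChain R) (hR : ∀ x y, R x y → P y) : ∀ y ∈ l, P y := by
  induction l generalizing a with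
  | nil => simp
  | cons b l ih =>
    rw [List.isChain_cons_cons] at h
    exact List.forall_mem_cons.2 ⟨hR a b h.1, ih h.2⟩

theorem List.IsChain.cons_takeWhile {α : Type*} {R : α → α → Prop} {p : α → Bool} {c : α}
    {u : List α} (h : (c :: u).IsChain R) (hc : p c) :
    (c :: u.takeWhile p).IsChain fun x y => R x y ∧ p x ∧ p y := by
  have hp : ∀ x ∈ c :: u.takeWhile p, p x :=
    List.forall_mem_cons.2 ⟨hc, fun _ => List.mem_takeWhile_imp⟩
  exact (h.prefix (List.cons_prefix_cons.2 ⟨rfl, List.takeWhile_prefix p⟩)).imp_of_mem_imp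
    fun x y hx hy hxy => ⟨hxy, hp x hx, hp y hy⟩

theorem List.mem_of_mem_head?_dropWhile {α : Type*} {p : α → Bool} {l : List α} {y : α}
    (hy : y ∈ (l.dropWhile p).head?) : y ∈ l ∧ p y = false := by
  refine ⟨(List.dropWhile_suffix p).subset (List.mem_of_mem_head? hy), ?_⟩
  have := List.head?_dropWhile_not p l
  rwa [Option.mem_def.1 hy] at this

theorem List.append_inj_of_takeWhile {α : Type*} {p : α → Bool} {u v u' v' : List α}
    (hu : ∀ x ∈ u, p x) (hu' : ∀ x ∈ u', p x)
    (hv : ∀ x ∈ v.head?, p x = false) (hv' : ∀ x ∈ v'.head?, p x = false)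
    (h : u ++ v = u' ++ v') : u = u' ∧ v = v' := by
  have key : ∀ {u v : List α}, (∀ x ∈ u, p x) → (∀ x ∈ v.head?, p x = false) →
      (u ++ v).takeWhile p = u := by
    intro u v hu hv
    rw [List.takeWhile_append_of_pos hu]
    cases v with
    | nil => simp
    | cons x v => simp [hv x rfl]
  have hu_eq : u = u' := by rw [← key hu hv, h, key hu' hv']
  exact ⟨hu_eq, by rw [hu_eq] at h; exact List.append_cancel_left h⟩

theorem ncard_setOf_ofFn_eq_card {α : Type*} {n : ℕ} {P : List α → Prop} {S : Finset (List α)}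
    (hS : ∀ l, l ∈ S ↔ P l ∧ l.length = n) :
    {f : Fin n → α | P (List.ofFn f)}.ncard = S.card := by
  rw [← Set.ncard_coe_finset, ← Set.ncard_image_of_injective _ List.ofFn_injective]
  congr 1
  ext l
  simp only [Set.mem_image, Set.mem_ofPred_eq, mem_coe, hS]
  constructor
  · rintro ⟨f, hf, rfl⟩
    exact ⟨hf, List.length_ofFn⟩
  · rintro ⟨hl, rfl⟩
    exact ⟨l.get, by rwa [List.ofFn_get], List.ofFn_get l⟩

theorem card_eq_one_of_mem_iff_length_eq_zero {α : Type*} {P : List α → Prop}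
    {S : Finset (List α)} (hS : ∀ l, l ∈ S ↔ P l ∧ l.length = 0) (hP : P []) : S.card = 1 :=
  card_eq_one.2 ⟨[], Finset.ext fun l => by
    rw [hS, mem_singleton, List.length_eq_zero_iff]
    exact ⟨And.right, fun hl => ⟨hl ▸ hP, hl⟩⟩⟩

def IsMotzkinFrom : ℤ → List ℤ → Prop
  | h, [] => h = 0
  | h, x :: l => 0 ≤ h ∧ (x = -1 ∨ x = 0 ∨ x = 1) ∧ IsMotzkinFrom (h + x) l

namespace IsMotzkinFrom

theorem nonneg {h : ℤ} {l : List ℤ} (hl : IsMotzkinFrom h l) : 0 ≤ h := by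
  cases l with
  | nil => exact (show h = 0 from hl).ge
  | cons x l => exact hl.1

theorem append_iff {j k : ℤ} {a r : List ℤ} (ha : IsMotzkinFrom j a) (hk : 0 ≤ k) :
    IsMotzkinFrom (j + k) (a ++ r) ↔ IsMotzkinFrom k r := by
  induction a generalizing j with
  | nil => rw [show j = 0 from ha, zero_add, List.nil_append]
  | cons x a ih =>
    obtain ⟨hj, hx, ha⟩ := ha
    rw [List.cons_append, IsMotzkinFrom, add_right_comm, ih ha]
    have := ha.nonneg
    exact ⟨fun h => h.2.2, fun h => ⟨by omega, hx, h⟩⟩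

theorem zero_append_iff {k : ℤ} {a r : List ℤ} (ha : IsMotzkinFrom 0 a) (hk : 0 ≤ k) :
    IsMotzkinFrom k (a ++ r) ↔ IsMotzkinFrom k r := by
  simpa using ha.append_iff (r := r) hk

theorem up_down {h : ℤ} {a b : List ℤ} (ha : IsMotzkinFrom 0 a) (hb : IsMotzkinFrom h b) :
    IsMotzkinFrom h (1 :: (a ++ (-1) :: b)) := by
  have := hb.nonneg
  refine ⟨this, by simp, ?_⟩
  rw [ha.zero_append_iff (by omega)]
  exact ⟨by omega, by simp, by simpa using hb⟩

/-- Split at the first return to height `h`. -/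
theorem exists_of_succ {h : ℤ} {l : List ℤ} (hl : IsMotzkinFrom (h + 1) l) (hh : 0 ≤ h) :
    ∃ a b, IsMotzkinFrom 0 a ∧ IsMotzkinFrom h b ∧ l = a ++ (-1) :: b := by
  induction hn : l.length using Nat.strong_induction_on generalizing h l with
  | _ n ih =>
  subst hn
  cases l with
  | nil => exact absurd (show h + 1 = 0 from hl) (by omega)
  | cons x l =>
    obtain ⟨-, hx | hx | hx, hl⟩ := hl <;> subst hx
    · exact ⟨[], l, rfl, by simpa using hl, rfl⟩
    · obtain ⟨a, b, ha, hb, rfl⟩ := ih l.length (by simp) (by simpa using hl) hh rfl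
      exact ⟨0 :: a, b, ⟨le_rfl, by simp, by simpa using ha⟩, hb, rfl⟩
    · obtain ⟨a₁, b₁, ha₁, hb₁, rfl⟩ := ih l.length (by simp) (h := h + 1) hl (by omega) rfl
      obtain ⟨a₂, b₂, ha₂, hb₂, rfl⟩ := ih b₁.length (by simp; omega) hb₁ hh rfl
      exact ⟨1 :: (a₁ ++ (-1) :: a₂), b₂, ha₁.up_down ha₂, hb₂, by simp⟩

theorem not_append_down {a c : List ℤ} (ha : IsMotzkinFrom 0 a) :
    ¬ IsMotzkinFrom 0 (a ++ (-1) :: c) := by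
  rw [ha.zero_append_iff le_rfl]
  exact fun h => absurd h.2.2.nonneg (by norm_num)

theorem append_down_inj {a a' b b' : List ℤ} (ha : IsMotzkinFrom 0 a) (ha' : IsMotzkinFrom 0 a')
    (h : a ++ (-1) :: b = a' ++ (-1) :: b') : a = a' ∧ b = b' := by
  rcases List.append_eq_append_iff.1 h with ⟨c, rfl, hc⟩ | ⟨c, rfl, hc⟩
  · cases c with
    | nil => simpa using hc
    | cons y c =>
      obtain ⟨rfl, -⟩ := List.cons_eq_cons.1 hc
      exact absurd ha' ha.not_append_down
  · cases c with
    | nil => simpa using hc.symm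
    | cons y c =>
      obtain ⟨rfl, -⟩ := List.cons_eq_cons.1 hc
      exact absurd ha ha'.not_append_down

end IsMotzkinFrom

theorem isMotzkinFrom_iff {h : ℤ} {l : List ℤ} :
    IsMotzkinFrom h l ↔ 0 ≤ h ∧ (∀ y ∈ l, y = -1 ∨ y = 0 ∨ y = 1) ∧
      (∀ i < l.length, 0 ≤ h + (l.take (i + 1)).sum) ∧ h + l.sum = 0 := by
  induction l generalizing h with
  | nil => simp [IsMotzkinFrom]; exact Eq.ge
  | cons x l ih =>
    simp only [IsMotzkinFrom, ih, List.forall_mem_cons, List.length_cons,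
      Nat.forall_lt_succ_left, List.take_succ_cons, List.sum_cons, List.take_zero, List.sum_nil,
      add_zero, add_assoc]
    tauto

theorem isMotzkinFrom_zero_ofFn_iff {n : ℕ} (s : Fin n → ℤ) :
    IsMotzkinFrom 0 (List.ofFn s) ↔ (∀ i, s i = -1 ∨ s i = 0 ∨ s i = 1) ∧
      (∀ j, 0 ≤ ∑ i ∈ Iic j, s i) ∧ ∑ i, s i = 0 := by
  have hIic (j : Fin n) : ∑ i ∈ Iic j, s i = ((List.ofFn s).take (j + 1)).sum := by
    rw [List.sum_take_ofFn]
    congr 1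
    ext i
    simp only [Finset.mem_Iic, Finset.mem_filter, Finset.mem_univ, true_and, Fin.le_def]
    omega
  simp only [isMotzkinFrom_iff, le_refl, zero_add, true_and, List.forall_mem_ofFn_iff,
    List.length_ofFn, List.sum_ofFn, hIic]
  exact and_congr_right' (and_congr_left' ⟨fun h j => h j j.2, fun h i hi => h ⟨i, hi⟩⟩)

theorem finite_setOf_isMotzkinFrom_zero (n : ℕ) :
    {l : List ℤ | IsMotzkinFrom 0 l ∧ l.length = n}.Finite :=
  (List.finite_setOf_length_eq_forall_mem (s := {-1, 0, 1}) (by simp) n).subset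
    fun _ hl => ⟨hl.2, (isMotzkinFrom_iff.1 hl.1).2.1⟩

noncomputable def motzkinPaths (n : ℕ) : Finset (List ℤ) :=
  (finite_setOf_isMotzkinFrom_zero n).toFinset

theorem mem_motzkinPaths {n : ℕ} {l : List ℤ} :
    l ∈ motzkinPaths n ↔ IsMotzkinFrom 0 l ∧ l.length = n :=
  Set.Finite.mem_toFinset _

theorem motzkinPaths_succ (n : ℕ) :
    motzkinPaths (n + 1) = (motzkinPaths n).image (0 :: ·) ∪ (range n).biUnion fun i =>
      (motzkinPaths i ×ˢ motzkinPaths (n - 1 - i)).image fun q => 1 :: (q.1 ++ (-1) :: q.2) := by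
  ext l
  simp only [mem_union, mem_image, mem_biUnion, mem_range, mem_product, mem_motzkinPaths,
    Prod.exists]
  constructor
  · rintro ⟨hl, hn⟩
    obtain ⟨x, l, rfl⟩ := List.exists_cons_of_length_eq_add_one hn
    obtain ⟨-, hx | hx | hx, hl⟩ := hl <;> subst hx
    · exact absurd hl.nonneg (by norm_num)
    · exact Or.inl ⟨l, ⟨hl, by simpa using hn⟩, rfl⟩
    · obtain ⟨a, b, ha, hb, rfl⟩ := IsMotzkinFrom.exists_of_succ (h := 0) hl le_rfl
      simp only [List.length_cons, List.length_append] at hn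
      exact Or.inr ⟨a.length, by omega, a, b, ⟨⟨ha, rfl⟩, hb, by omega⟩, rfl⟩
  · rintro (⟨l, ⟨hl, rfl⟩, rfl⟩ | ⟨i, hi, a, b, ⟨⟨ha, rfl⟩, hb, hbn⟩, rfl⟩)
    · exact ⟨⟨le_rfl, by simp, by simpa using hl⟩, rfl⟩
    · exact ⟨ha.up_down hb, by simp; omega⟩

theorem card_motzkinPaths (n : ℕ) : (motzkinPaths n).card = motzkin n := by
  induction n using Nat.strong_induction_on with
  | _ n ih =>
  cases n with
  | zero =>
    rw [motzkin_zero]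
    exact card_eq_one_of_mem_iff_length_eq_zero (fun _ => mem_motzkinPaths) rfl
  | succ n =>
    rw [motzkinPaths_succ, card_image_union_biUnion_image, motzkin_succ, ih n (by omega)]
    · refine congrArg _ (sum_congr rfl fun i hi => ?_)
      rw [mem_range] at hi
      rw [ih i (by omega), ih (n - 1 - i) (by omega)]
    · exact List.cons_injective
    · intro i j a a' b b' ha ha' _ _ h
      rw [mem_motzkinPaths] at ha ha'
      obtain ⟨rfl, rfl⟩ := IsMotzkinFrom.append_down_inj ha.1 ha'.1 (List.cons_injective h)
      exact ⟨ha.2.symm.trans ha'.2, rfl, rfl⟩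
    · simp

theorem motzkinNumber_eq_motzkin (n : ℕ) : motzkinNumber n = motzkin n := by
  rw [motzkinNumber, ← card_motzkinPaths]
  simp_rw [← isMotzkinFrom_zero_ofFn_iff]
  exact ncard_setOf_ofFn_eq_card fun _ => mem_motzkinPaths

def IsFlatFreeFrom (b : ℕ) (t : List ℕ) : Prop :=
  (b :: t).IsChain fun x y => b ≤ y ∧ y ≤ x + 1 ∧ y ≠ x

namespace IsFlatFreeFrom

variable {b : ℕ} {s t : List ℕ}

theorem le_of_mem (ht : IsFlatFreeFrom b t) : ∀ y ∈ t, b ≤ y :=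
  ht.forall_mem_of_cons fun _ _ h => h.1

theorem rise (hs : IsFlatFreeFrom (b + 1) s) : IsFlatFreeFrom b ((b + 1) :: s) :=
  List.IsChain.cons_cons ⟨b.le_succ, le_rfl, by omega⟩ (hs.imp fun _ _ h => ⟨by omega, h.2⟩)

theorem rise_append (hs : IsFlatFreeFrom (b + 1) s) (ht : IsFlatFreeFrom b t) :
    IsFlatFreeFrom b ((b + 1) :: (s ++ b :: t)) := by
  have hs' := hs.rise
  unfold IsFlatFreeFrom at hs' ⊢
  rw [← List.cons_append, ← List.cons_append, List.isChain_append]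
  refine ⟨hs', ht, fun x hx y hy => ?_⟩
  obtain rfl : b = y := by simpa using hy
  rw [List.getLast?_cons_cons] at hx
  have : b + 1 ≤ x := (List.mem_cons.1 (List.mem_of_mem_getLast? hx)).elim (·.ge) (hs.le_of_mem x)
  omega

theorem exists_of_ne_nil (ht : IsFlatFreeFrom b t) (hne : t ≠ []) :
    (∃ s, IsFlatFreeFrom (b + 1) s ∧ t = (b + 1) :: s) ∨
      ∃ s t', IsFlatFreeFrom (b + 1) s ∧ IsFlatFreeFrom b t' ∧ t = (b + 1) :: (s ++ b :: t') := by
  obtain ⟨c, u, rfl⟩ := List.exists_cons_of_ne_nil hne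
  have hu := ht.le_of_mem
  unfold IsFlatFreeFrom at ht
  rw [List.isChain_cons_cons] at ht
  obtain rfl : c = b + 1 := by omega
  set p : ℕ → Bool := fun x => b + 1 ≤ x
  have hs : IsFlatFreeFrom (b + 1) (u.takeWhile p) :=
    (ht.2.cons_takeWhile (p := p) (by simp [p])).imp fun _ _ h => ⟨by simpa [p] using h.2.2, h.1.2⟩
  rcases hr : u.dropWhile p with _ | ⟨y, t'⟩
  · exact Or.inl ⟨_, hs, by rw [← List.append_nil (u.takeWhile p), ← hr,
      List.takeWhile_append_dropWhile]⟩
  · obtain ⟨hyu, hy⟩ := List.mem_of_mem_head?_dropWhile (p := p) (l := u) (y := y) (by simp [hr])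
    obtain rfl : y = b := by
      have := hu y (List.mem_cons_of_mem _ hyu)
      simp [p] at hy
      omega
    have ht' := ht.2.tail.suffix (List.dropWhile_suffix (l := u) p)
    rw [hr] at ht'
    exact Or.inr ⟨_, t', hs, ht', by rw [← hr, List.takeWhile_append_dropWhile]⟩

end IsFlatFreeFrom

theorem finite_setOf_isFlatFreeFrom (b n : ℕ) :
    {t : List ℕ | IsFlatFreeFrom b t ∧ t.length = n}.Finite :=
  (List.finite_setOf_length_eq_forall_mem (Set.finite_Iic (b + n)) n).subset fun _ ⟨ht, hn⟩ =>
    ⟨hn, fun y hy => hn ▸ List.le_add_length_of_isChain (ht.imp fun _ _ h => h.2.1) y hy⟩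

noncomputable def flatFree (b n : ℕ) : Finset (List ℕ) :=
  (finite_setOf_isFlatFreeFrom b n).toFinset

theorem mem_flatFree {b n : ℕ} {t : List ℕ} :
    t ∈ flatFree b n ↔ IsFlatFreeFrom b t ∧ t.length = n :=
  Set.Finite.mem_toFinset _

theorem flatFree_succ (b n : ℕ) :
    flatFree b (n + 1) = (flatFree (b + 1) n).image ((b + 1) :: ·) ∪ (range n).biUnion fun i =>
      (flatFree (b + 1) i ×ˢ flatFree b (n - 1 - i)).image
        fun q => (b + 1) :: (q.1 ++ b :: q.2) := by
  ext t
  simp only [mem_union, mem_image, mem_biUnion, mem_range, mem_product, mem_flatFree,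
    Prod.exists]
  constructor
  · rintro ⟨ht, hn⟩
    rcases ht.exists_of_ne_nil (List.ne_nil_of_length_eq_add_one hn) with
      ⟨s, hs, rfl⟩ | ⟨s, t', hs, ht', rfl⟩
    · exact Or.inl ⟨s, ⟨hs, by simpa using hn⟩, rfl⟩
    · simp only [List.length_cons, List.length_append] at hn
      exact Or.inr ⟨s.length, by omega, s, t', ⟨⟨hs, rfl⟩, ht', by omega⟩, rfl⟩
  · rintro (⟨s, ⟨hs, rfl⟩, rfl⟩ | ⟨i, hi, s, t', ⟨⟨hs, rfl⟩, ht', hn⟩, rfl⟩)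
    · exact ⟨hs.rise, rfl⟩
    · exact ⟨hs.rise_append ht', by simp; omega⟩

theorem card_flatFree (b n : ℕ) : (flatFree b n).card = motzkin n := by
  induction n using Nat.strong_induction_on generalizing b with
  | _ n ih =>
  cases n with
  | zero =>
    rw [motzkin_zero]
    exact card_eq_one_of_mem_iff_length_eq_zero (fun _ => mem_flatFree)
      (List.isChain_singleton b)
  | succ n =>
    rw [flatFree_succ, card_image_union_biUnion_image, motzkin_succ, ih n (by omega)]
    · refine congrArg _ (sum_congr rfl fun i hi => ?_)
      rw [mem_range] at hi
      rw [ih i (by omega), ih (n - 1 - i) (by omega)]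
    · exact List.cons_injective
    · intro i j s s' t t' hs hs' _ _ h
      rw [mem_flatFree] at hs hs'
      obtain ⟨rfl, h⟩ := List.append_inj_of_takeWhile (p := fun x => b + 1 ≤ x)
        (by simpa using hs.1.le_of_mem) (by simpa using hs'.1.le_of_mem) (by simp) (by simp)
        (List.cons_injective h)
      exact ⟨hs.2.symm.trans hs'.2, rfl, List.cons_injective h⟩
    · intro s₀ hs₀ i s t _ _ h
      have hb : b ∈ s₀ := List.cons_injective h ▸ by simp
      exact absurd ((mem_flatFree.1 hs₀).1.le_of_mem b hb) (by omega)

/-- A Catalan word avoiding 1-22, as a list: equal neighbours occur only at height 1. -/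
def IsAvoidingCatalan (w : List ℕ) : Prop :=
  (∀ a ∈ w.head?, a = 1) ∧ w.IsChain fun x y => 1 ≤ y ∧ y ≤ x + 1 ∧ (y = x → x = 1)

namespace IsAvoidingCatalan

variable {s u w : List ℕ}

theorem nil : IsAvoidingCatalan [] := ⟨by simp, List.isChain_nil⟩

theorem cons_one (hw : IsAvoidingCatalan w) : IsAvoidingCatalan (1 :: w) :=
  ⟨by simp, List.isChain_cons.2 ⟨fun y hy => by simp [hw.1 y hy], hw.2⟩⟩

theorem cons_one_two_append (hs : IsFlatFreeFrom 2 s) (hw : IsAvoidingCatalan w) :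
    IsAvoidingCatalan (1 :: 2 :: (s ++ w)) := by
  refine ⟨by simp, ?_⟩
  rw [← List.cons_append, ← List.cons_append, List.isChain_append]
  refine ⟨List.IsChain.cons_cons (by omega) (hs.imp fun _ _ h => ⟨by omega, h.2.1, by omega⟩),
    hw.2, fun x hx y hy => ?_⟩
  rw [List.getLast?_cons_cons] at hx
  have : 2 ≤ x := (List.mem_cons.1 (List.mem_of_mem_getLast? hx)).elim (·.ge) (hs.le_of_mem x)
  obtain rfl := hw.1 y hy
  omega

theorem exists_of_cons_one (hu : IsAvoidingCatalan (1 :: u)) :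
    IsAvoidingCatalan u ∨ ∃ s w, IsFlatFreeFrom 2 s ∧ IsAvoidingCatalan w ∧ u = 2 :: (s ++ w) := by
  have hpos := hu.2.forall_mem_of_cons fun _ _ h => h.1
  rcases u with _ | ⟨c, u⟩
  · exact Or.inl nil
  have hc := hu.2
  rw [List.isChain_cons_cons] at hc
  obtain rfl | rfl : c = 1 ∨ c = 2 := by omega
  · exact Or.inl ⟨by simp, hc.2⟩
  set p : ℕ → Bool := fun x => 2 ≤ x
  have hs : IsFlatFreeFrom 2 (u.takeWhile p) :=
    (hc.2.cons_takeWhile (p := p) (by simp [p])).imp fun x y h => by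
      simp only [p, decide_eq_true_eq] at h
      exact ⟨h.2.2, h.1.2.1, fun hxy => by omega⟩
  refine Or.inr ⟨u.takeWhile p, u.dropWhile p, hs,
    ⟨fun y hy => ?_, hc.2.tail.suffix (List.dropWhile_suffix (l := u) p)⟩,
    by rw [List.takeWhile_append_dropWhile]⟩
  obtain ⟨hyu, hy⟩ := List.mem_of_mem_head?_dropWhile hy
  have := hpos y (List.mem_cons_of_mem _ hyu)
  simp [p] at hy
  omega

end IsAvoidingCatalan

theorem finite_setOf_isAvoidingCatalan (n : ℕ) :
    {w : List ℕ | IsAvoidingCatalan w ∧ w.length = n}.Finite := by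
  refine (List.finite_setOf_length_eq_forall_mem (Set.finite_Iic n) n).subset ?_
  rintro (_ | ⟨a, t⟩) ⟨hw, rfl⟩
  · simp
  obtain rfl : a = 1 := hw.1 a rfl
  refine ⟨rfl, List.forall_mem_cons.2 ⟨by simp, fun y hy => ?_⟩⟩
  have := List.le_add_length_of_isChain (hw.2.imp fun _ _ h => h.2.1) y hy
  simp only [List.length_cons, Set.mem_Iic]
  omega

noncomputable def avoidingCatalan (n : ℕ) : Finset (List ℕ) :=
  (finite_setOf_isAvoidingCatalan n).toFinset

theorem mem_avoidingCatalan {n : ℕ} {w : List ℕ} :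
    w ∈ avoidingCatalan n ↔ IsAvoidingCatalan w ∧ w.length = n :=
  Set.Finite.mem_toFinset _

theorem avoidingCatalan_succ (n : ℕ) :
    avoidingCatalan (n + 1) = (avoidingCatalan n).image (1 :: ·) ∪ (range n).biUnion fun i =>
      (flatFree 2 i ×ˢ avoidingCatalan (n - 1 - i)).image fun q => 1 :: 2 :: (q.1 ++ q.2) := by
  ext w
  simp only [mem_union, mem_image, mem_biUnion, mem_range, mem_product, mem_avoidingCatalan,
    mem_flatFree, Prod.exists]
  constructor
  · rintro ⟨hw, hn⟩
    obtain ⟨a, u, rfl⟩ := List.exists_cons_of_length_eq_add_one hn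
    obtain rfl : a = 1 := hw.1 a rfl
    rcases hw.exists_of_cons_one with hu | ⟨s, w, hs, hw', rfl⟩
    · exact Or.inl ⟨u, ⟨hu, by simpa using hn⟩, rfl⟩
    · simp only [List.length_cons, List.length_append] at hn
      exact Or.inr ⟨s.length, by omega, s, w, ⟨⟨hs, rfl⟩, hw', by omega⟩, rfl⟩
  · rintro (⟨u, ⟨hu, rfl⟩, rfl⟩ | ⟨i, hi, s, w, ⟨⟨hs, rfl⟩, hw, hn⟩, rfl⟩)
    · exact ⟨hu.cons_one, rfl⟩
    · exact ⟨hw.cons_one_two_append hs, by simp; omega⟩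

theorem card_avoidingCatalan (n : ℕ) : (avoidingCatalan n).card = motzkin n := by
  induction n using Nat.strong_induction_on with
  | _ n ih =>
  cases n with
  | zero =>
    rw [motzkin_zero]
    exact card_eq_one_of_mem_iff_length_eq_zero (fun _ => mem_avoidingCatalan)
      IsAvoidingCatalan.nil
  | succ n =>
    rw [avoidingCatalan_succ, card_image_union_biUnion_image, motzkin_succ, ih n (by omega)]
    · refine congrArg _ (sum_congr rfl fun i hi => ?_)
      rw [mem_range] at hi
      rw [card_flatFree, ih (n - 1 - i) (by omega)]
    · exact List.cons_injective
    · intro i j s s' w w' hs hs' hw hw' h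
      rw [mem_flatFree] at hs hs'
      obtain ⟨rfl, rfl⟩ := List.append_inj_of_takeWhile (p := fun x => 2 ≤ x)
        (by simpa using hs.1.le_of_mem) (by simpa using hs'.1.le_of_mem)
        (fun x hx => by simp [(mem_avoidingCatalan.1 hw).1.1 x hx])
        (fun x hx => by simp [(mem_avoidingCatalan.1 hw').1.1 x hx])
        (List.cons_injective (List.cons_injective h))
      exact ⟨hs.2.symm.trans hs'.2, rfl, rfl⟩
    · intro u hu i s w _ _ h
      have h2 := (mem_avoidingCatalan.1 hu).1.1 2 (by simp [List.cons_injective h])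
      exact absurd h2 (by norm_num)

theorem isAvoidingCatalan_ofFn_iff {n : ℕ} (w : Fin n → ℕ) :
    IsAvoidingCatalan (List.ofFn w) ↔ IsCatalanWord w ∧ ¬ Contains1_22 w := by
  have hhead : (∀ a ∈ (List.ofFn w).head?, a = 1) ↔ ∀ h : 0 < n, w ⟨0, h⟩ = 1 := by
    cases n with
    | zero => simp
    | succ n => simp [List.ofFn_succ]
  simp only [IsAvoidingCatalan, hhead, List.isChain_iff_getElem, List.length_ofFn,
    List.getElem_ofFn]
  constructor
  · rintro ⟨h0, hc⟩
    have hpos : ∀ i, 1 ≤ w i := by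
      rintro ⟨_ | i, hi⟩
      exacts [(h0 hi).ge, (hc i hi).1]
    refine ⟨⟨hpos, h0, fun i hi => (hc i hi).2.1⟩, ?_⟩
    rintro ⟨i, j, hj, hij, hlt, heq⟩
    have := hpos ⟨i, by omega⟩
    have := (hc j hj).2.2 heq.symm
    omega
  · rintro ⟨⟨hpos, h0, hstep⟩, havoid⟩
    refine ⟨h0, fun j hj => ⟨hpos _, hstep j hj, fun heq => ?_⟩⟩
    by_contra hne
    have hj0 : j ≠ 0 := by
      rintro rfl
      exact hne (h0 _)
    exact havoid ⟨0, j, hj, Nat.pos_of_ne_zero hj0,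
      by rw [h0]; exact lt_of_le_of_ne (hpos _) (Ne.symm hne), heq.symm⟩

theorem catalan_avoid_1_22_general (n : ℕ) :
    Set.ncard {w : Fin n → ℕ | IsCatalanWord w ∧ ¬ Contains1_22 w} =
      motzkinNumber n := by
  simp_rw [← isAvoidingCatalan_ofFn_iff]
  rw [ncard_setOf_ofFn_eq_card fun _ => mem_avoidingCatalan, card_avoidingCatalan,
    motzkinNumber_eq_motzkin]

theorem catalan_avoid_1_22 (n : ℕ) (hn : 1 ≤ n) :
    Set.ncard {w : Fin n → ℕ | IsCatalanWord w ∧ ¬ Contains1_22 w} =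
      motzkinNumber n :=
  catalan_avoid_1_22_general n
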